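/- Let h : M₃(ℝ) × M₃(ℝ) × (0,∞) → ℝ satisfy the coercivity bound h(F, C, δ) ≥ α(‖F‖ᵖ + ‖C‖^q + δʳ) + β for all (F, C, δ), where α > 0, β ∈ ℝ and p, q, r ≥ 1, and let G be a 3×3 real matrix with det G > 0. Then there exist α' > 0 and β' ∈ ℝ such that for all F ∈ GL⁺: (det G)·h(F G⁻¹, cof(F G⁻¹), det(F G⁻¹)) ≥ α'(‖F‖ᵖ + ‖cof F‖^q + (det F)ʳ) + β'. -/

import Mathlib

/-!
Writing `F = (F G⁻¹) G`, the multiplicativity of `cof` and `det` together with the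
submultiplicativity of the Frobenius norm make the growth
`‖F‖ᵖ + ‖cof F‖^q + (det F)ʳ` submultiplicative on matrices with nonnegative determinant.
Hence the growth of `F` is at most a fixed multiple (the growth of `G`) of the growth of
`F G⁻¹`, to which the coercivity bound of `h` applies.
-/

open Matrix

/-- The Frobenius norm of a 3×3 real matrix. -/
noncomputable def frob (A : Matrix (Fin 3) (Fin 3) ℝ) : ℝ :=
  Real.sqrt (Matrix.trace (Aᵀ * A))

/-- GL⁺: the set of 3×3 real matrices with positive determinant. -/
def GLpos : Set (Matrix (Fin 3) (Fin 3) ℝ) := {F | 0 < F.det}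

/-- The cofactor matrix of a 3×3 real matrix: `cof A = (det A) (A⁻¹)ᵀ`. -/
noncomputable def cof (A : Matrix (Fin 3) (Fin 3) ℝ) : Matrix (Fin 3) (Fin 3) ℝ :=
  A.det • (A⁻¹)ᵀ

section Frobenius

attribute [local instance] Matrix.frobeniusNormedAddCommGroup

lemma frob_eq_norm (A : Matrix (Fin 3) (Fin 3) ℝ) : frob A = ‖A‖ := by
  have htrace : trace (Aᵀ * A) = ∑ j, ∑ i, ‖A i j‖ ^ (2 : ℝ) := by
    simp only [trace, diag, mul_apply, transpose_apply, Real.norm_eq_abs, Real.rpow_two, sq,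
      abs_mul_abs_self]
  rw [frobenius_norm_def, frob, htrace, Finset.sum_comm, Real.sqrt_eq_rpow]

lemma frob_nonneg (A : Matrix (Fin 3) (Fin 3) ℝ) : 0 ≤ frob A := by
  rw [frob_eq_norm]
  exact norm_nonneg A

lemma frob_mul_le (A B : Matrix (Fin 3) (Fin 3) ℝ) : frob (A * B) ≤ frob A * frob B := by
  simp only [frob_eq_norm]
  exact frobenius_norm_mul A B

end Frobenius

lemma frob_mul_rpow_le {p : ℝ} (hp : 0 ≤ p) (A B : Matrix (Fin 3) (Fin 3) ℝ) :
    frob (A * B) ^ p ≤ frob A ^ p * frob B ^ p := by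
  rw [← Real.mul_rpow (frob_nonneg A) (frob_nonneg B)]
  exact Real.rpow_le_rpow (frob_nonneg _) (frob_mul_le A B) hp

lemma cof_mul (A B : Matrix (Fin 3) (Fin 3) ℝ) : cof (A * B) = cof A * cof B := by
  simp only [cof, det_mul, Matrix.mul_inv_rev, transpose_mul, Matrix.smul_mul, Matrix.mul_smul,
    smul_smul, mul_comm]

noncomputable def coerciveGrowth (p q r : ℝ) (F : Matrix (Fin 3) (Fin 3) ℝ) : ℝ :=
  frob F ^ p + frob (cof F) ^ q + F.det ^ r

lemma coerciveGrowth_pos (p q r : ℝ) {F : Matrix (Fin 3) (Fin 3) ℝ} (hF : 0 < F.det) :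
    0 < coerciveGrowth p q r F := by
  have := Real.rpow_nonneg (frob_nonneg F) p
  have := Real.rpow_nonneg (frob_nonneg (cof F)) q
  have := Real.rpow_pos_of_pos hF r
  unfold coerciveGrowth
  linarith

lemma coerciveGrowth_mul_le {p q : ℝ} (r : ℝ) (hp : 0 ≤ p) (hq : 0 ≤ q)
    {A B : Matrix (Fin 3) (Fin 3) ℝ} (hA : 0 ≤ A.det) (hB : 0 ≤ B.det) :
    coerciveGrowth p q r (A * B) ≤ coerciveGrowth p q r A * coerciveGrowth p q r B := by
  have hnorm := frob_mul_rpow_le hp A B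
  have hcof : frob (cof (A * B)) ^ q ≤ frob (cof A) ^ q * frob (cof B) ^ q := by
    rw [cof_mul]
    exact frob_mul_rpow_le hq _ _
  have hdet : (A * B).det ^ r = A.det ^ r * B.det ^ r := by
    rw [det_mul, Real.mul_rpow hA hB]
  have := Real.rpow_nonneg (frob_nonneg A) p
  have := Real.rpow_nonneg (frob_nonneg B) p
  have := Real.rpow_nonneg (frob_nonneg (cof A)) q
  have := Real.rpow_nonneg (frob_nonneg (cof B)) q
  have := Real.rpow_nonneg hA r
  have := Real.rpow_nonneg hB r
  unfold coerciveGrowth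
  nlinarith

theorem coercivity_inherited_by_distortion_general
    (h : Matrix (Fin 3) (Fin 3) ℝ × Matrix (Fin 3) (Fin 3) ℝ × ℝ → ℝ)
    (α β p q r : ℝ) (hα : 0 < α) (hp : 1 ≤ p) (hq : 1 ≤ q)
    (hcoer : ∀ F C : Matrix (Fin 3) (Fin 3) ℝ, ∀ δ : ℝ, 0 < δ →
      α * (frob F ^ p + frob C ^ q + δ ^ r) + β ≤ h (F, C, δ))
    (G : Matrix (Fin 3) (Fin 3) ℝ) (hG : 0 < G.det) :
    ∃ α' : ℝ, 0 < α' ∧ ∃ β' : ℝ, ∀ F ∈ GLpos,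
      α' * (frob F ^ p + frob (cof F) ^ q + F.det ^ r) + β' ≤
        G.det * h (F * G⁻¹, cof (F * G⁻¹), (F * G⁻¹).det) := by
  have hK := coerciveGrowth_pos p q r hG
  refine ⟨G.det * α / coerciveGrowth p q r G, by positivity, G.det * β, fun F hF => ?_⟩
  have hFG : 0 < (F * G⁻¹).det := by
    rw [det_mul, det_nonsing_inv, Ring.inverse_eq_inv']
    exact mul_pos hF (inv_pos.mpr hG)
  have hgrowth :
      coerciveGrowth p q r F ≤ coerciveGrowth p q r (F * G⁻¹) * coerciveGrowth p q r G := by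
    conv_lhs => rw [← nonsing_inv_mul_cancel_right G F (isUnit_iff_ne_zero.mpr hG.ne')]
    exact coerciveGrowth_mul_le r (by linarith) (by linarith) hFG.le hG.le
  have hscaled : G.det * α / coerciveGrowth p q r G * coerciveGrowth p q r F ≤
      G.det * (α * coerciveGrowth p q r (F * G⁻¹)) := by
    rw [div_mul_eq_mul_div, div_le_iff₀ hK]
    nlinarith [mul_le_mul_of_nonneg_left hgrowth (mul_pos hG hα).le]
  calc G.det * α / coerciveGrowth p q r G * coerciveGrowth p q r F + G.det * β
      ≤ G.det * (α * coerciveGrowth p q r (F * G⁻¹) + β) := by linarith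
    _ ≤ G.det * h (F * G⁻¹, cof (F * G⁻¹), (F * G⁻¹).det) :=
        mul_le_mul_of_nonneg_left (hcoer _ _ _ hFG) hG.le

/-- Coercivity of the relaxed energy transfers (with modified constants) to the energy
distorted by a fixed `G` with `det G > 0`. -/
theorem coercivity_inherited_by_distortion
    (h : Matrix (Fin 3) (Fin 3) ℝ × Matrix (Fin 3) (Fin 3) ℝ × ℝ → ℝ)
    (α β p q r : ℝ) (hα : 0 < α) (hp : 1 ≤ p) (hq : 1 ≤ q) (hr : 1 ≤ r)
    (hcoer : ∀ F C : Matrix (Fin 3) (Fin 3) ℝ, ∀ δ : ℝ, 0 < δ →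
      α * (frob F ^ p + frob C ^ q + δ ^ r) + β ≤ h (F, C, δ))
    (G : Matrix (Fin 3) (Fin 3) ℝ) (hG : 0 < G.det) :
    ∃ α' : ℝ, 0 < α' ∧ ∃ β' : ℝ, ∀ F ∈ GLpos,
      α' * (frob F ^ p + frob (cof F) ^ q + F.det ^ r) + β' ≤
        G.det * h (F * G⁻¹, cof (F * G⁻¹), (F * G⁻¹).det) :=
  coercivity_inherited_by_distortion_general h α β p q r hα hp hq hcoer G hG
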